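/- Let A be an n×n real symmetric positive semidefinite matrix with eigenvalues λ₁ ≥ ⋯ ≥ λ_n, let μ > 0, and let Â = U Λ̂ Uᵀ be any rank-ℓ Nyström approximation of A (so Â = A⟨X⟩ for some test matrix X, U ∈ ℝ^{n×ℓ} has orthonormal columns with ℓ < n, and Λ̂ = diag(λ̂₁ ≥ ⋯ ≥ λ̂_ℓ) is psd). Set E = A − Â and define the Nyström preconditioner P = (λ̂_ℓ+μ)⁻¹ U(Λ̂+μI)Uᵀ + (I − UUᵀ). Then max{(λ̂_ℓ+μ)/(λ_n+μ), 1} ≤ κ₂(P^{-1/2}(A+μI)P^{-1/2}) ≤ (λ̂_ℓ + μ + ‖E‖) · min{ 1/μ, (λ̂_ℓ + λ_n + 2μ) / ((λ̂_ℓ+μ)(λ_n+μ)) }. -/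

import Mathlib

open Matrix MeasureTheory ProbabilityTheory
open scoped Classical

/-- Moore–Penrose pseudoinverse (characterized by the four Penrose conditions). -/
noncomputable def pinv {m n : ℕ} (A : Matrix (Fin m) (Fin n) ℝ) : Matrix (Fin n) (Fin m) ℝ :=
  if h : ∃ B : Matrix (Fin n) (Fin m) ℝ,
      A * B * A = A ∧ B * A * B = B ∧ (A * B)ᵀ = A * B ∧ (B * A)ᵀ = B * A
  then h.choose else 0

/-- Nyström approximation of `A` with respect to the test matrix `X`. -/
noncomputable def nystrom {n l : ℕ} (A : Matrix (Fin n) (Fin n) ℝ)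
    (X : Matrix (Fin n) (Fin l) ℝ) : Matrix (Fin n) (Fin n) ℝ :=
  A * X * pinv (Xᵀ * A * X) * (A * X)ᵀ

/-- Spectral (ℓ² operator) norm of a matrix. -/
noncomputable def specNorm {m n : ℕ} (M : Matrix (Fin m) (Fin n) ℝ) : ℝ :=
  ‖LinearMap.toContinuousLinearMap (Matrix.toEuclideanLin M)‖

/-- Frobenius norm of a matrix. -/
noncomputable def frobNorm {m n : ℕ} (M : Matrix (Fin m) (Fin n) ℝ) : ℝ :=
  Real.sqrt (∑ i, ∑ j, (M i j) ^ 2)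

/-- Euclidean norm of a vector. -/
noncomputable def euclNorm {n : ℕ} (x : Fin n → ℝ) : ℝ :=
  Real.sqrt (∑ i, (x i) ^ 2)

/-- Law of an `n × l` random matrix with independent standard normal entries. -/
noncomputable def gaussianEnsemble (n l : ℕ) : Measure (Fin n → Fin l → ℝ) :=
  Measure.pi fun _ => Measure.pi fun _ => gaussianReal 0 1

/-- The psd square root of a psd matrix (junk value `0` otherwise). -/
noncomputable def matSqrt {n : ℕ} (M : Matrix (Fin n) (Fin n) ℝ) : Matrix (Fin n) (Fin n) ℝ :=
  if hM : M.PosSemidef then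
    hM.1.eigenvectorUnitary.1 * diagonal ((RCLike.ofReal : ℝ → ℝ) ∘ (√·) ∘ hM.1.eigenvalues) *
      (star hM.1.eigenvectorUnitary : Matrix (Fin n) (Fin n) ℝ) else 0

/-- ℓ² condition number of a symmetric matrix: ratio of the largest to the smallest
eigenvalue (junk value `0` for non-symmetric matrices). -/
noncomputable def kappa {n : ℕ} (M : Matrix (Fin n) (Fin n) ℝ) : ℝ :=
  if hM : M.IsHermitian then (⨆ i, hM.eigenvalues i) / (⨅ i, hM.eigenvalues i) else 0

/-!
Put `S = P^{1/2}`. The extreme eigenvalues of `S⁻¹(A + μI)S⁻¹` are the extreme values of the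
generalized Rayleigh quotient `zᵀ(A + μI)z / zᵀPz`, so the theorem reduces to comparing the
quadratic forms of `A + μI` and `P`. With `Â = UΛ̂Uᵀ` one has `E = A - Â ⪰ 0`, because
`A - A⟨X⟩ = A^{1/2}(I - Π)A^{1/2}` for the orthogonal projection `Π` onto the range of `A^{1/2}X`,
and `(λ̂_ℓ + μ)(P - I) = Â - λ̂_ℓUUᵀ` lies between `Â - λ̂_ℓI` and `Â`. This gives
`I ⪯ P`, `μP ⪯ A + μI ⪯ (λ̂_ℓ + μ + ‖E‖)P` and `P ⪯ ((λ̂_ℓ + μ)⁻¹ + (λ_n + μ)⁻¹)(A + μI)`,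
which bound the quotient everywhere. Finally `λ_max ≥ λ̂_ℓ + μ` and `λ_min ≤ λ_n + μ` by testing
the quotient at `Ue_ℓ`, where `zᵀPz = 1` and `zᵀ(A + μI)z ≥ λ̂_ℓ + μ`, and at a bottom
eigenvector of `A`.
-/

open scoped MatrixOrder

section QuadraticForm

variable {ι κ : Type*} [Fintype ι] [Fintype κ]

theorem dotProduct_mulVec_le_of_posSemidef_sub {M N : Matrix ι ι ℝ} (h : (N - M).PosSemidef)
    (x : ι → ℝ) : x ⬝ᵥ M *ᵥ x ≤ x ⬝ᵥ N *ᵥ x := by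
  have := h.dotProduct_mulVec_nonneg x
  rw [star_trivial, sub_mulVec, dotProduct_sub] at this
  linarith

theorem dotProduct_mul_mul_transpose_mulVec (B : Matrix ι κ ℝ) (C : Matrix κ κ ℝ) (x : ι → ℝ) :
    x ⬝ᵥ (B * C * Bᵀ) *ᵥ x = (Bᵀ *ᵥ x) ⬝ᵥ C *ᵥ (Bᵀ *ᵥ x) := by
  rw [← mulVec_mulVec, ← mulVec_mulVec, dotProduct_mulVec, ← mulVec_transpose]

theorem dotProduct_mul_transpose_mulVec (B : Matrix ι κ ℝ) (x : ι → ℝ) :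
    x ⬝ᵥ (B * Bᵀ) *ᵥ x = (Bᵀ *ᵥ x) ⬝ᵥ (Bᵀ *ᵥ x) := by
  rw [← mulVec_mulVec, dotProduct_mulVec, ← mulVec_transpose, dotProduct_comm]

theorem dotProduct_mulVec_self_eq_mul_self {S : Matrix ι ι ℝ} (hS : Sᵀ = S) (z : ι → ℝ) :
    (S *ᵥ z) ⬝ᵥ (S *ᵥ z) = z ⬝ᵥ (S * S) *ᵥ z := by
  rw [dotProduct_mulVec, ← mulVec_transpose, hS, mulVec_mulVec, dotProduct_comm]

theorem dotProduct_mulVec_self_of_transpose_mul_self [DecidableEq κ] {U : Matrix ι κ ℝ}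
    (hU : Uᵀ * U = 1) (y : κ → ℝ) : (U *ᵥ y) ⬝ᵥ (U *ᵥ y) = y ⬝ᵥ y := by
  rw [dotProduct_comm, dotProduct_mulVec, ← mulVec_transpose, mulVec_mulVec, hU, one_mulVec]

variable [DecidableEq ι]

theorem mul_dotProduct_self_le_diagonal {d : ι → ℝ} {m : ℝ} (hm : ∀ i, m ≤ d i) (w : ι → ℝ) :
    m * (w ⬝ᵥ w) ≤ w ⬝ᵥ diagonal d *ᵥ w := by
  simp only [dotProduct, mulVec_diagonal, Finset.mul_sum]
  exact Finset.sum_le_sum fun i _ => by nlinarith [hm i, mul_self_nonneg (w i)]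

theorem diagonal_le_mul_dotProduct_self {d : ι → ℝ} {m : ℝ} (hm : ∀ i, d i ≤ m) (w : ι → ℝ) :
    w ⬝ᵥ diagonal d *ᵥ w ≤ m * (w ⬝ᵥ w) := by
  simp only [dotProduct, mulVec_diagonal, Finset.mul_sum]
  exact Finset.sum_le_sum fun i _ => by nlinarith [hm i, mul_self_nonneg (w i)]

end QuadraticForm

section Orthogonal

variable {ι κ : Type*} [Fintype ι] [Fintype κ] [DecidableEq κ]

theorem dotProduct_mulVec_single_eq {V : Matrix ι κ ℝ} (hV : Vᵀ * V = 1) (d : κ → ℝ) (i : κ) :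
    (V *ᵥ Pi.single i 1) ⬝ᵥ (V * diagonal d * Vᵀ) *ᵥ (V *ᵥ Pi.single i 1) = d i := by
  rw [dotProduct_mul_mul_transpose_mulVec, mulVec_mulVec, hV, one_mulVec]
  simp [dotProduct, mulVec_diagonal, Pi.single_apply]

theorem dotProduct_mulVec_single_self {V : Matrix ι κ ℝ} (hV : Vᵀ * V = 1) (i : κ) :
    (V *ᵥ Pi.single i 1) ⬝ᵥ (V *ᵥ Pi.single i 1) = 1 := by
  rw [dotProduct_mulVec_self_of_transpose_mul_self hV]
  simp [dotProduct, Pi.single_apply]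

variable [DecidableEq ι] {V : Matrix ι ι ℝ} {d : ι → ℝ} {m : ℝ}

theorem mul_dotProduct_self_le_conj_diagonal (hV : Vᵀ * V = 1) (hm : ∀ i, m ≤ d i) (x : ι → ℝ) :
    m * (x ⬝ᵥ x) ≤ x ⬝ᵥ (V * diagonal d * Vᵀ) *ᵥ x := by
  have hV' : Vᵀᵀ * Vᵀ = 1 := by rw [transpose_transpose, mul_eq_one_comm.mp hV]
  rw [dotProduct_mul_mul_transpose_mulVec, ← dotProduct_mulVec_self_of_transpose_mul_self hV' x]
  exact mul_dotProduct_self_le_diagonal hm _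

theorem conj_diagonal_le_mul_dotProduct_self (hV : Vᵀ * V = 1) (hm : ∀ i, d i ≤ m) (x : ι → ℝ) :
    x ⬝ᵥ (V * diagonal d * Vᵀ) *ᵥ x ≤ m * (x ⬝ᵥ x) := by
  have hV' : Vᵀᵀ * Vᵀ = 1 := by rw [transpose_transpose, mul_eq_one_comm.mp hV]
  rw [dotProduct_mul_mul_transpose_mulVec, ← dotProduct_mulVec_self_of_transpose_mul_self hV' x]
  exact diagonal_le_mul_dotProduct_self hm _

end Orthogonal

namespace Matrix.IsHermitian

variable {ι : Type*} [Fintype ι] [DecidableEq ι] {M : Matrix ι ι ℝ} (hM : M.IsHermitian)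

theorem transpose_eigenvectorUnitary_mul_self :
    (hM.eigenvectorUnitary : Matrix ι ι ℝ)ᵀ * hM.eigenvectorUnitary = 1 := by
  simpa [star_eq_conjTranspose] using Matrix.mem_unitaryGroup_iff'.mp hM.eigenvectorUnitary.2

theorem eq_eigenvectorUnitary_mul_diagonal_mul_transpose :
    M = hM.eigenvectorUnitary * diagonal hM.eigenvalues *
      (hM.eigenvectorUnitary : Matrix ι ι ℝ)ᵀ := by
  conv_lhs => rw [hM.spectral_theorem, Unitary.conjStarAlgAut_apply]
  simp [star_eq_conjTranspose]

theorem iInf_eigenvalues_mul_le (x : ι → ℝ) :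
    (⨅ i, hM.eigenvalues i) * (x ⬝ᵥ x) ≤ x ⬝ᵥ M *ᵥ x := by
  conv_rhs => rw [hM.eq_eigenvectorUnitary_mul_diagonal_mul_transpose]
  exact mul_dotProduct_self_le_conj_diagonal hM.transpose_eigenvectorUnitary_mul_self
    (fun i => ciInf_le (Set.finite_range _).bddBelow i) x

theorem le_iSup_eigenvalues_mul (x : ι → ℝ) :
    x ⬝ᵥ M *ᵥ x ≤ (⨆ i, hM.eigenvalues i) * (x ⬝ᵥ x) := by
  conv_lhs => rw [hM.eq_eigenvectorUnitary_mul_diagonal_mul_transpose]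
  exact conj_diagonal_le_mul_dotProduct_self hM.transpose_eigenvectorUnitary_mul_self
    (fun i => le_ciSup (Set.finite_range _).bddAbove i) x

theorem exists_dotProduct_self_eq_one_and_eq_eigenvalues (i : ι) :
    ∃ x : ι → ℝ, x ⬝ᵥ x = 1 ∧ x ⬝ᵥ M *ᵥ x = hM.eigenvalues i := by
  have h := dotProduct_mulVec_single_eq hM.transpose_eigenvectorUnitary_mul_self hM.eigenvalues i
  rw [← hM.eq_eigenvectorUnitary_mul_diagonal_mul_transpose] at h
  exact ⟨_, dotProduct_mulVec_single_self hM.transpose_eigenvectorUnitary_mul_self i, h⟩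

end Matrix.IsHermitian

section Congruence

variable {ι : Type*} [Fintype ι] [DecidableEq ι] {S Q P : Matrix ι ι ℝ}

theorem isHermitian_inv_mul_mul_inv (hS : Sᵀ = S) (hQ : Qᵀ = Q) : (S⁻¹ * Q * S⁻¹).IsHermitian := by
  simp [IsHermitian, transpose_nonsing_inv, hS, hQ, Matrix.mul_assoc]

theorem dotProduct_inv_mul_mul_inv_mulVec (hS : Sᵀ = S) (hSu : IsUnit S.det) (z : ι → ℝ) :
    (S *ᵥ z) ⬝ᵥ (S⁻¹ * Q * S⁻¹) *ᵥ (S *ᵥ z) = z ⬝ᵥ Q *ᵥ z := by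
  have hSinv : S⁻¹ᵀ = S⁻¹ := by rw [transpose_nonsing_inv, hS]
  rw [show S⁻¹ * Q * S⁻¹ = S⁻¹ * Q * S⁻¹ᵀ by rw [hSinv], dotProduct_mul_mul_transpose_mulVec,
    hSinv, mulVec_mulVec, nonsing_inv_mul S hSu, one_mulVec]

variable (hS : Sᵀ = S) (hSu : IsUnit S.det) (hSP : S * S = P)
  (hM : (S⁻¹ * Q * S⁻¹).IsHermitian)
include hS hSu hSP

theorem iInf_eigenvalues_le_of_conj (hM₀ : 0 ≤ ⨅ i, hM.eigenvalues i) {z : ι → ℝ}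
    (hz : 1 ≤ z ⬝ᵥ P *ᵥ z) : ⨅ i, hM.eigenvalues i ≤ z ⬝ᵥ Q *ᵥ z := by
  have h := hM.iInf_eigenvalues_mul_le (S *ᵥ z)
  rw [dotProduct_mulVec_self_eq_mul_self hS, hSP, dotProduct_inv_mul_mul_inv_mulVec hS hSu] at h
  exact (le_mul_of_one_le_right hM₀ hz).trans h

theorem le_iSup_eigenvalues_of_conj {z : ι → ℝ} (hz : z ⬝ᵥ P *ᵥ z = 1) :
    z ⬝ᵥ Q *ᵥ z ≤ ⨆ i, hM.eigenvalues i := by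
  simpa only [dotProduct_mulVec_self_eq_mul_self hS, hSP, dotProduct_inv_mul_mul_inv_mulVec hS hSu,
    hz, mul_one] using hM.le_iSup_eigenvalues_mul (S *ᵥ z)

theorem exists_eq_eigenvalues_of_conj (i : ι) :
    ∃ z : ι → ℝ, z ⬝ᵥ P *ᵥ z = 1 ∧ z ⬝ᵥ Q *ᵥ z = hM.eigenvalues i := by
  obtain ⟨x, hx1, hxM⟩ := hM.exists_dotProduct_self_eq_one_and_eq_eigenvalues i
  have hx : S *ᵥ (S⁻¹ *ᵥ x) = x := by rw [mulVec_mulVec, mul_nonsing_inv S hSu, one_mulVec]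
  refine ⟨S⁻¹ *ᵥ x, ?_, ?_⟩
  · rw [← hSP, ← dotProduct_mulVec_self_eq_mul_self hS, hx, hx1]
  · rw [← dotProduct_inv_mul_mul_inv_mulVec hS hSu, hx, hxM]

theorem le_iInf_eigenvalues_of_conj [Nonempty ι] {α : ℝ}
    (h : ∀ z, α * (z ⬝ᵥ P *ᵥ z) ≤ z ⬝ᵥ Q *ᵥ z) : α ≤ ⨅ i, hM.eigenvalues i :=
  le_ciInf fun i => by
    obtain ⟨z, hz1, hzQ⟩ := exists_eq_eigenvalues_of_conj hS hSu hSP hM i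
    simpa [hz1, hzQ] using h z

theorem iSup_eigenvalues_le_of_conj [Nonempty ι] {β : ℝ}
    (h : ∀ z, z ⬝ᵥ Q *ᵥ z ≤ β * (z ⬝ᵥ P *ᵥ z)) : ⨆ i, hM.eigenvalues i ≤ β :=
  ciSup_le fun i => by
    obtain ⟨z, hz1, hzQ⟩ := exists_eq_eigenvalues_of_conj hS hSu hSP hM i
    simpa [hz1, hzQ] using h z

end Congruence

section Projection

variable {ι κ : Type*} [Fintype ι] [Fintype κ] [DecidableEq κ]

theorem mul_mul_transpose_mul_self_of_inner_inverse {Y : Matrix ι κ ℝ} {G : Matrix κ κ ℝ}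
    (hG : Yᵀ * Y * G * (Yᵀ * Y) = Yᵀ * Y) : Y * G * (Yᵀ * Y) = Y := by
  have hYD : Yᵀ * (Y * (G * (Yᵀ * Y) - 1)) = 0 := by
    have h : Yᵀ * (Y * (G * (Yᵀ * Y) - 1)) = Yᵀ * Y * G * (Yᵀ * Y) - Yᵀ * Y := by
      simp only [Matrix.mul_sub, Matrix.mul_one, Matrix.mul_assoc]
    rw [h, hG, sub_self]
  have hDD : (Y * (G * (Yᵀ * Y) - 1))ᴴ * (Y * (G * (Yᵀ * Y) - 1)) = 0 := by
    rw [conjTranspose_eq_transpose_of_trivial, transpose_mul, Matrix.mul_assoc, hYD,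
      Matrix.mul_zero]
  have hD := conjTranspose_mul_self_eq_zero.mp hDD
  rwa [Matrix.mul_sub, Matrix.mul_one, sub_eq_zero, ← Matrix.mul_assoc] at hD

variable [DecidableEq ι]

theorem posSemidef_one_sub_of_transpose_eq_of_mul_self_eq {N : Matrix ι ι ℝ} (hsymm : Nᵀ = N)
    (hidem : N * N = N) : (1 - N).PosSemidef := by
  have hN : IsStarProjection N :=
    ⟨hidem, by rwa [IsSelfAdjoint, star_eq_conjTranspose, conjTranspose_eq_transpose_of_trivial]⟩
  exact nonneg_iff_posSemidef.mp hN.one_sub_nonneg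

theorem dotProduct_transpose_mulVec_self_le {U : Matrix ι κ ℝ} (hU : Uᵀ * U = 1) (z : ι → ℝ) :
    (Uᵀ *ᵥ z) ⬝ᵥ (Uᵀ *ᵥ z) ≤ z ⬝ᵥ z := by
  have hproj : (1 - U * Uᵀ).PosSemidef := by
    refine posSemidef_one_sub_of_transpose_eq_of_mul_self_eq (by simp) ?_
    rw [Matrix.mul_assoc, ← Matrix.mul_assoc Uᵀ, hU, Matrix.one_mul]
  simpa [dotProduct_mul_transpose_mulVec] using dotProduct_mulVec_le_of_posSemidef_sub hproj z

theorem posSemidef_one_sub_mul_mul_transpose_of_inner_inverse {Y : Matrix ι κ ℝ}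
    {G : Matrix κ κ ℝ} (hG : Yᵀ * Y * G * (Yᵀ * Y) = Yᵀ * Y) : (1 - Y * G * Yᵀ).PosSemidef := by
  have hYG := mul_mul_transpose_mul_self_of_inner_inverse hG
  refine posSemidef_one_sub_of_transpose_eq_of_mul_self_eq ?_ ?_
  · calc (Y * G * Yᵀ)ᵀ = Y * G * (Yᵀ * Y) * Gᵀ * Yᵀ := by simp [hYG, Matrix.mul_assoc]
      _ = Y * G * (Y * G * (Yᵀ * Y))ᵀ := by simp [Matrix.mul_assoc]
      _ = Y * G * Yᵀ := by rw [hYG]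
  · calc Y * G * Yᵀ * (Y * G * Yᵀ) = Y * G * (Yᵀ * Y) * G * Yᵀ := by simp only [Matrix.mul_assoc]
      _ = Y * G * Yᵀ := by rw [hYG]

end Projection

section SquareRoot

variable {m : ℕ}

theorem transpose_sqrt {ι : Type*} [Fintype ι] [DecidableEq ι] (M : Matrix ι ι ℝ) :
    (CFC.sqrt M)ᵀ = CFC.sqrt M := by
  simpa [IsHermitian] using (nonneg_iff_posSemidef.mp (CFC.sqrt_nonneg M)).1.eq

theorem matSqrt_eq_sqrt {M : Matrix (Fin m) (Fin m) ℝ} (hM : M.PosSemidef) :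
    matSqrt M = CFC.sqrt M := by
  have : 0 ≤ M := hM.nonneg
  rw [CFC.sqrt_eq_real_sqrt M, cfcₙ_eq_cfc, hM.1.cfc_eq, matSqrt, dif_pos hM,
    Matrix.IsHermitian.cfc, Unitary.conjStarAlgAut_apply]

theorem matSqrt_spec_of_posDef {P : Matrix (Fin m) (Fin m) ℝ} (hP : P.PosDef) :
    (matSqrt P)ᵀ = matSqrt P ∧ IsUnit (matSqrt P).det ∧ matSqrt P * matSqrt P = P := by
  have h0 : 0 ≤ P := hP.posSemidef.nonneg
  rw [matSqrt_eq_sqrt hP.posSemidef, ← isUnit_iff_isUnit_det, CFC.isUnit_sqrt_iff P h0]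
  exact ⟨transpose_sqrt P, hP.isUnit, CFC.sqrt_mul_sqrt_self P h0⟩

end SquareRoot

section Nystrom

variable {m n l : ℕ}

-- `x ↦ x⁻¹` with the convention `0⁻¹ = 0` is the pseudoinverse on the spectrum.
theorem exists_penrose_inverse_of_isHermitian {S : Matrix (Fin m) (Fin m) ℝ} (hS : S.IsHermitian) :
    ∃ B : Matrix (Fin m) (Fin m) ℝ,
      S * B * S = S ∧ B * S * B = B ∧ (S * B)ᵀ = S * B ∧ (B * S)ᵀ = B * S := by
  have hcont (f : ℝ → ℝ) : ContinuousOn f (spectrum ℝ S) := S.finite_real_spectrum.continuousOn f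
  have hmul (f g : ℝ → ℝ) : cfc f S * cfc g S = cfc (fun x => f x * g x) S :=
    (cfc_mul f g S (hcont f) (hcont g)).symm
  have hsymm (f : ℝ → ℝ) : (cfc f S)ᵀ = cfc f S := by
    simpa [IsSelfAdjoint, star_eq_conjTranspose] using (IsSelfAdjoint.cfc : IsSelfAdjoint (cfc f S))
  have hid : cfc (fun x : ℝ => x) S = S := cfc_id' ℝ S hS
  have hSB : S * cfc (fun x : ℝ => x⁻¹) S = cfc (fun x : ℝ => x * x⁻¹) S := by rw [← hmul, hid]
  have hBS : cfc (fun x : ℝ => x⁻¹) S * S = cfc (fun x : ℝ => x⁻¹ * x) S := by rw [← hmul, hid]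
  refine ⟨cfc (fun x : ℝ => x⁻¹) S, ?_, ?_, hSB ▸ hsymm _, hBS ▸ hsymm _⟩
  · calc S * cfc (fun x : ℝ => x⁻¹) S * S = cfc (fun x : ℝ => x * x⁻¹) S * cfc (fun x => x) S := by
          rw [hSB, hid]
      _ = S := by rw [hmul]; simp only [mul_inv_mul_cancel, hid]
  · calc cfc (fun x : ℝ => x⁻¹) S * S * cfc (fun x : ℝ => x⁻¹) S
          = cfc (fun x : ℝ => x⁻¹ * x) S * cfc (fun x : ℝ => x⁻¹) S := by rw [hBS]
      _ = cfc (fun x : ℝ => x⁻¹) S := by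
          rw [hmul]
          exact congrArg (cfc · S) (funext fun x => by simpa using mul_inv_mul_cancel x⁻¹)

theorem mul_pinv_mul_self {S : Matrix (Fin m) (Fin m) ℝ} (hS : S.IsHermitian) :
    S * pinv S * S = S := by
  have hex := exists_penrose_inverse_of_isHermitian hS
  rw [pinv, dif_pos hex]
  exact hex.choose_spec.1

theorem posSemidef_sub_nystrom {A : Matrix (Fin n) (Fin n) ℝ} (hA : A.PosSemidef)
    (X : Matrix (Fin n) (Fin l) ℝ) : (A - nystrom A X).PosSemidef := by
  set C := CFC.sqrt A
  set G := pinv (Xᵀ * A * X)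
  have hCC : C * C = A := CFC.sqrt_mul_sqrt_self A hA.nonneg
  have hCt : Cᵀ = C := transpose_sqrt A
  have hS : Xᵀ * A * X = (C * X)ᵀ * (C * X) := by
    rw [← hCC, transpose_mul, hCt]; simp only [Matrix.mul_assoc]
  have hG : (C * X)ᵀ * (C * X) * G * ((C * X)ᵀ * (C * X)) = (C * X)ᵀ * (C * X) := by
    rw [← hS]
    exact mul_pinv_mul_self (by simpa using (hA.conjTranspose_mul_mul_same X).1)
  have hE : A - nystrom A X = Cᴴ * (1 - C * X * G * (C * X)ᵀ) * C := by
    change A - A * X * G * (A * X)ᵀ = _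
    rw [conjTranspose_eq_transpose_of_trivial, hCt, ← hCC]
    simp only [Matrix.mul_sub, Matrix.sub_mul, Matrix.mul_one, transpose_mul, hCt, Matrix.mul_assoc]
  rw [hE]
  exact (posSemidef_one_sub_mul_mul_transpose_of_inner_inverse hG).conjTranspose_mul_mul_same C

theorem dotProduct_mulVec_le_specNorm_mul (E : Matrix (Fin n) (Fin n) ℝ) (z : Fin n → ℝ) :
    z ⬝ᵥ E *ᵥ z ≤ specNorm E * (z ⬝ᵥ z) := by
  set v : EuclideanSpace ℝ (Fin n) := WithLp.toLp 2 z
  set T := LinearMap.toContinuousLinearMap (toEuclideanLin E)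
  have hvTv : inner ℝ v (T v) = z ⬝ᵥ E *ᵥ z := by
    simp [v, T, EuclideanSpace.inner_toLp_toLp, dotProduct_comm]
  have hvv : ‖v‖ ^ 2 = z ⬝ᵥ z := by
    rw [← real_inner_self_eq_norm_sq, EuclideanSpace.inner_toLp_toLp, star_trivial]
  calc z ⬝ᵥ E *ᵥ z = inner ℝ v (T v) := hvTv.symm
    _ ≤ ‖v‖ * (‖T‖ * ‖v‖) := (real_inner_le_norm v (T v)).trans (by gcongr; exact T.le_opNorm v)
    _ = specNorm E * (z ⬝ᵥ z) := by rw [← hvv, specNorm]; ring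

end Nystrom

section Preconditioner

variable {ι κ : Type*} [Fintype κ] [DecidableEq ι] [DecidableEq κ]

-- `ν` plays the role of `λ̂_ℓ`.
noncomputable def nystromPreconditioner (U : Matrix ι κ ℝ) (d : κ → ℝ) (ν μ : ℝ) : Matrix ι ι ℝ :=
  (ν + μ)⁻¹ • (U * (diagonal d + μ • 1) * Uᵀ) + (1 - U * Uᵀ)

variable {U : Matrix ι κ ℝ} {d : κ → ℝ} {ν μ : ℝ}

theorem nystromPreconditioner_isHermitian : (nystromPreconditioner U d ν μ).IsHermitian := by
  simp [nystromPreconditioner, IsHermitian, transpose_mul, Matrix.mul_assoc]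

variable [Fintype ι] {A : Matrix ι ι ℝ}

theorem mul_dotProduct_nystromPreconditioner_sub (hc : ν + μ ≠ 0) (z : ι → ℝ) :
    (ν + μ) * (z ⬝ᵥ nystromPreconditioner U d ν μ *ᵥ z - z ⬝ᵥ z) =
      z ⬝ᵥ (U * diagonal d * Uᵀ) *ᵥ z - ν * ((Uᵀ *ᵥ z) ⬝ᵥ (Uᵀ *ᵥ z)) := by
  simp only [nystromPreconditioner, add_mulVec, sub_mulVec, smul_mulVec, one_mulVec,
    dotProduct_add, dotProduct_sub, dotProduct_smul, dotProduct_mul_mul_transpose_mulVec,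
    dotProduct_mul_transpose_mulVec, smul_eq_mul]
  field_simp
  ring

theorem dotProduct_add_smul_one_mulVec (z : ι → ℝ) :
    z ⬝ᵥ (A + μ • 1) *ᵥ z = z ⬝ᵥ A *ᵥ z + μ * (z ⬝ᵥ z) := by
  simp [add_mulVec, smul_mulVec, dotProduct_add]

theorem exists_nystromPreconditioner_eq_one (hU : Uᵀ * U = 1)
    (hE : (A - U * diagonal d * Uᵀ).PosSemidef) (j : κ) (hc : d j + μ ≠ 0) :
    ∃ z, z ⬝ᵥ nystromPreconditioner U d (d j) μ *ᵥ z = 1 ∧ d j + μ ≤ z ⬝ᵥ (A + μ • 1) *ᵥ z := by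
  have hz := dotProduct_mulVec_single_self hU j
  have hUz : Uᵀ *ᵥ (U *ᵥ Pi.single j 1) = Pi.single j 1 := by rw [mulVec_mulVec, hU, one_mulVec]
  have hÂ := dotProduct_mulVec_single_eq hU d j
  refine ⟨U *ᵥ Pi.single j 1, ?_, ?_⟩
  · have h := mul_dotProduct_nystromPreconditioner_sub (U := U) (d := d) hc (U *ᵥ Pi.single j 1)
    rw [hz, hÂ, hUz, single_dotProduct, Pi.single_eq_same, mul_one, mul_one, sub_self,
      mul_eq_zero, sub_eq_zero] at h
    exact h.resolve_left hc
  · have := dotProduct_mulVec_le_of_posSemidef_sub hE (U *ᵥ Pi.single j 1)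
    rw [dotProduct_add_smul_one_mulVec, hz]
    linarith

variable (hU : Uᵀ * U = 1) (hν : 0 ≤ ν) (hd : ∀ i, ν ≤ d i) (hμ : 0 < μ)
include hU hν hd hμ

theorem dotProduct_nystromPreconditioner_sub_bounds (z : ι → ℝ) :
    0 ≤ z ⬝ᵥ nystromPreconditioner U d ν μ *ᵥ z - z ⬝ᵥ z ∧
    z ⬝ᵥ (U * diagonal d * Uᵀ) *ᵥ z - ν * (z ⬝ᵥ z) ≤
      (ν + μ) * (z ⬝ᵥ nystromPreconditioner U d ν μ *ᵥ z - z ⬝ᵥ z) ∧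
    (ν + μ) * (z ⬝ᵥ nystromPreconditioner U d ν μ *ᵥ z - z ⬝ᵥ z) ≤
      z ⬝ᵥ (U * diagonal d * Uᵀ) *ᵥ z := by
  have hc : 0 < ν + μ := by linarith
  have hdiag : ν * ((Uᵀ *ᵥ z) ⬝ᵥ (Uᵀ *ᵥ z)) ≤ z ⬝ᵥ (U * diagonal d * Uᵀ) *ᵥ z := by
    rw [dotProduct_mul_mul_transpose_mulVec]; exact mul_dotProduct_self_le_diagonal hd _
  have hs : 0 ≤ (Uᵀ *ᵥ z) ⬝ᵥ (Uᵀ *ᵥ z) := by simpa using dotProduct_star_self_nonneg (Uᵀ *ᵥ z)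
  have hsr := dotProduct_transpose_mulVec_self_le hU z
  have h := mul_dotProduct_nystromPreconditioner_sub (U := U) (d := d) hc.ne' z
  refine ⟨?_, by nlinarith, by nlinarith⟩
  nlinarith

theorem dotProduct_self_le_nystromPreconditioner (z : ι → ℝ) :
    z ⬝ᵥ z ≤ z ⬝ᵥ nystromPreconditioner U d ν μ *ᵥ z := by
  linarith [(dotProduct_nystromPreconditioner_sub_bounds hU hν hd hμ z).1]

theorem nystromPreconditioner_posDef : (nystromPreconditioner U d ν μ).PosDef :=
  .of_dotProduct_mulVec_pos nystromPreconditioner_isHermitian fun z hz => by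
    simpa using (dotProduct_star_self_pos_iff.mpr hz).trans_le
      (dotProduct_self_le_nystromPreconditioner hU hν hd hμ z)

theorem add_smul_one_le_mul_nystromPreconditioner {e : ℝ}
    (hAe : ∀ z, z ⬝ᵥ (A - U * diagonal d * Uᵀ) *ᵥ z ≤ e * (z ⬝ᵥ z)) (he : 0 ≤ e) (z : ι → ℝ) :
    z ⬝ᵥ (A + μ • 1) *ᵥ z ≤ (ν + μ + e) * (z ⬝ᵥ nystromPreconditioner U d ν μ *ᵥ z) := by
  obtain ⟨h0, hlo, -⟩ := dotProduct_nystromPreconditioner_sub_bounds hU hν hd hμ z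
  have := hAe z
  rw [sub_mulVec, dotProduct_sub] at this
  rw [dotProduct_add_smul_one_mulVec]
  nlinarith

variable (hE : (A - U * diagonal d * Uᵀ).PosSemidef)
include hE

theorem mul_nystromPreconditioner_le_add_smul_one (z : ι → ℝ) :
    μ * (z ⬝ᵥ nystromPreconditioner U d ν μ *ᵥ z) ≤ z ⬝ᵥ (A + μ • 1) *ᵥ z := by
  obtain ⟨h0, -, hhi⟩ := dotProduct_nystromPreconditioner_sub_bounds hU hν hd hμ z
  have := dotProduct_mulVec_le_of_posSemidef_sub hE z
  rw [dotProduct_add_smul_one_mulVec]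
  nlinarith

theorem harmonic_mul_nystromPreconditioner_le_add_smul_one {m : ℝ} (hmμ : 0 < m + μ)
    (hm : ∀ z, m * (z ⬝ᵥ z) ≤ z ⬝ᵥ A *ᵥ z) (z : ι → ℝ) :
    ((ν + μ)⁻¹ + (m + μ)⁻¹)⁻¹ * (z ⬝ᵥ nystromPreconditioner U d ν μ *ᵥ z) ≤
      z ⬝ᵥ (A + μ • 1) *ᵥ z := by
  obtain ⟨-, -, hhi⟩ := dotProduct_nystromPreconditioner_sub_bounds hU hν hd hμ z
  have hÂ := dotProduct_mulVec_le_of_posSemidef_sub hE z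
  have hmz := hm z
  have hc : 0 < ν + μ := by linarith
  have hr : 0 ≤ z ⬝ᵥ z := by simpa using dotProduct_star_self_nonneg z
  have h₁ : z ⬝ᵥ nystromPreconditioner U d ν μ *ᵥ z - z ⬝ᵥ z ≤
      (ν + μ)⁻¹ * (z ⬝ᵥ A *ᵥ z + μ * (z ⬝ᵥ z)) := by
    rw [le_inv_mul_iff₀ hc]; nlinarith
  have h₂ : z ⬝ᵥ z ≤ (m + μ)⁻¹ * (z ⬝ᵥ A *ᵥ z + μ * (z ⬝ᵥ z)) := by
    rw [le_inv_mul_iff₀ hmμ]; linarith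
  rw [dotProduct_add_smul_one_mulVec, inv_mul_le_iff₀ (by positivity)]
  linarith

end Preconditioner

theorem condition_number_bounds_of_eigenvalue_bounds {ν m μ e a b : ℝ} (hμ : 0 < μ) (hν : 0 ≤ ν)
    (hb₁ : μ ≤ b) (hb₂ : ((ν + μ)⁻¹ + (m + μ)⁻¹)⁻¹ ≤ b) (hb₃ : b ≤ m + μ)
    (ha₁ : ν + μ ≤ a) (ha₂ : a ≤ ν + μ + e) (hba : b ≤ a) :
    max ((ν + μ) / (m + μ)) 1 ≤ a / b ∧
      a / b ≤ (ν + μ + e) * min (1 / μ) ((ν + m + 2 * μ) / ((ν + μ) * (m + μ))) := by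
  have hb : 0 < b := hμ.trans_le hb₁
  have hm : 0 < m + μ := hb.trans_le hb₃
  have hc : 0 < ν + μ := by linarith
  have hharm : (ν + m + 2 * μ) / ((ν + μ) * (m + μ)) = (ν + μ)⁻¹ + (m + μ)⁻¹ := by
    field_simp; ring
  refine ⟨max_le ?_ ((one_le_div hb).mpr hba), ?_⟩
  · exact div_le_div₀ (hc.le.trans ha₁) ha₁ hb hb₃
  · rw [div_eq_mul_inv, hharm]
    refine mul_le_mul ha₂ (le_min ?_ ?_) (inv_nonneg.mpr hb.le) (hc.le.trans (ha₁.trans ha₂))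
    · rw [one_div]; exact inv_anti₀ hμ hb₁
    · simpa using inv_anti₀ (by positivity) hb₂

/-- Deterministic condition-number bounds for the Nyström
preconditioner `P = (λ̂_ℓ+μ)⁻¹U(Λ̂+μI)Uᵀ + (I − UUᵀ)` built from an arbitrary
rank-`ℓ` Nyström approximation `Â = A⟨X⟩ = UΛ̂Uᵀ` (0-indexed: `λ̂_ℓ = lamhat ⟨l-1,_⟩`,
`λ_n = lam ⟨n-1,_⟩`). -/
theorem nystrom_preconditioner_deterministic_bound {n l : ℕ}
    (hl1 : 1 ≤ l) (hln : l < n)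
    (A : Matrix (Fin n) (Fin n) ℝ) (hA : A.PosSemidef)
    (lam : Fin n → ℝ) (hanti : Antitone lam)
    (V : Matrix (Fin n) (Fin n) ℝ) (hV : Vᵀ * V = 1)
    (hdecomp : A = V * Matrix.diagonal lam * Vᵀ)
    (μ : ℝ) (hμ : 0 < μ)
    (X : Matrix (Fin n) (Fin l) ℝ)
    (U : Matrix (Fin n) (Fin l) ℝ) (hU : Uᵀ * U = 1)
    (lamhat : Fin l → ℝ) (hanti' : Antitone lamhat) (hnn : ∀ i, 0 ≤ lamhat i)
    (hAhat : nystrom A X = U * Matrix.diagonal lamhat * Uᵀ)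
    (P : Matrix (Fin n) (Fin n) ℝ)
    (hP : P = (lamhat ⟨l - 1, by omega⟩ + μ)⁻¹ •
        (U * (Matrix.diagonal lamhat + μ • (1 : Matrix (Fin l) (Fin l) ℝ)) * Uᵀ)
        + ((1 : Matrix (Fin n) (Fin n) ℝ) - U * Uᵀ)) :
    max ((lamhat ⟨l - 1, by omega⟩ + μ) / (lam ⟨n - 1, by omega⟩ + μ)) 1
      ≤ kappa ((matSqrt P)⁻¹ * (A + μ • (1 : Matrix (Fin n) (Fin n) ℝ)) * (matSqrt P)⁻¹)
    ∧ kappa ((matSqrt P)⁻¹ * (A + μ • (1 : Matrix (Fin n) (Fin n) ℝ)) * (matSqrt P)⁻¹)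
      ≤ (lamhat ⟨l - 1, by omega⟩ + μ + specNorm (A - nystrom A X)) *
        min (1 / μ)
          ((lamhat ⟨l - 1, by omega⟩ + lam ⟨n - 1, by omega⟩ + 2 * μ)
            / ((lamhat ⟨l - 1, by omega⟩ + μ) * (lam ⟨n - 1, by omega⟩ + μ))) := by
  have : NeZero n := ⟨by omega⟩
  set j : Fin l := ⟨l - 1, by omega⟩
  set i : Fin n := ⟨n - 1, by omega⟩
  have hj : ∀ k, lamhat j ≤ lamhat k := fun k => hanti' (Fin.le_def.mpr (by simp [j]; omega))
  have hi : ∀ k, lam i ≤ lam k := fun k => hanti (Fin.le_def.mpr (by simp [i]; omega))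
  have hE : (A - U * diagonal lamhat * Uᵀ).PosSemidef := hAhat ▸ posSemidef_sub_nystrom hA X
  have hAi : ∀ z, lam i * (z ⬝ᵥ z) ≤ z ⬝ᵥ A *ᵥ z :=
    hdecomp ▸ mul_dotProduct_self_le_conj_diagonal hV hi
  set v := V *ᵥ Pi.single i 1
  have hv : v ⬝ᵥ v = 1 := dotProduct_mulVec_single_self hV i
  have hvA : v ⬝ᵥ A *ᵥ v = lam i := by rw [hdecomp, dotProduct_mulVec_single_eq hV]
  have hlam : 0 ≤ lam i := by simpa only [star_trivial, hvA] using hA.dotProduct_mulVec_nonneg v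
  obtain rfl : P = nystromPreconditioner U lamhat (lamhat j) μ := hP
  obtain ⟨hSt, hSu, hSS⟩ := matSqrt_spec_of_posDef (nystromPreconditioner_posDef hU (hnn j) hj hμ)
  have hM := isHermitian_inv_mul_mul_inv (Q := A + μ • 1) hSt (by simpa using hA.1.eq)
  rw [kappa, dif_pos hM, hAhat]
  have hb : μ ≤ ⨅ k, hM.eigenvalues k := le_iInf_eigenvalues_of_conj hSt hSu hSS hM
    (mul_nystromPreconditioner_le_add_smul_one hU (hnn j) hj hμ hE)
  refine condition_number_bounds_of_eigenvalue_bounds hμ (hnn j) hb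
    (le_iInf_eigenvalues_of_conj hSt hSu hSS hM
      (harmonic_mul_nystromPreconditioner_le_add_smul_one hU (hnn j) hj hμ hE (by linarith) hAi))
    ?_ ?_ (iSup_eigenvalues_le_of_conj hSt hSu hSS hM (add_smul_one_le_mul_nystromPreconditioner
      hU (hnn j) hj hμ (dotProduct_mulVec_le_specNorm_mul _) (norm_nonneg _)))
    (ciInf_le_ciSup (Set.finite_range _).bddBelow (Set.finite_range _).bddAbove)
  · calc ⨅ k, hM.eigenvalues k ≤ v ⬝ᵥ (A + μ • 1) *ᵥ v :=
          iInf_eigenvalues_le_of_conj hSt hSu hSS hM (hμ.le.trans hb)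
            (hv ▸ dotProduct_self_le_nystromPreconditioner hU (hnn j) hj hμ v)
      _ = lam i + μ := by rw [dotProduct_add_smul_one_mulVec, hvA, hv, mul_one]
  · obtain ⟨z, hz, hzA⟩ :=
      exists_nystromPreconditioner_eq_one (μ := μ) hU hE j (by linarith [hnn j])
    exact hzA.trans (le_iSup_eigenvalues_of_conj hSt hSu hSS hM hz)
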